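/- Let (X,S,T) be a distal minimal system with commuting transformations S and T. Then for x,y ∈ X the following are equivalent: (i) (x,y,y,y) ∈ Q_{S,T}(X); (ii) (x,y) ∈ R_S(X); (iii) (x,y) ∈ R_T(X). In particular R_S(X) = R_T(X) = R_{S,T}(X). -/

import Mathlib

/-- The `n`-th integer iterate of a homeomorphism, as a function. -/
def hpow {X : Type*} [TopologicalSpace X] (S : X ≃ₜ X) (n : ℤ) : X → X :=
  ⇑(S.toEquiv ^ n)

variable {X : Type*} [TopologicalSpace X]

def cube (S T : X ≃ₜ X) : Set (X × X × X × X) :=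
  closure {p | ∃ (x : X) (n m : ℤ),
    p = (x, hpow S n x, hpow T m x, hpow S n (hpow T m x))}

def cube2 (S : X ≃ₜ X) : Set (X × X) :=
  closure {p | ∃ (x : X) (n : ℤ), p = (x, hpow S n x)}

def relS (S T : X ≃ₜ X) : Set (X × X) :=
  {p | ∃ a : X, (p.1, p.2, a, a) ∈ cube S T}

def relT (S T : X ≃ₜ X) : Set (X × X) :=
  {p | ∃ b : X, (p.1, b, p.2, b) ∈ cube S T}

def minimalST (S T : X ≃ₜ X) : Prop :=
  ∀ x : X, Dense {y : X | ∃ n m : ℤ, y = hpow S n (hpow T m x)}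

def minimal1 (S : X ≃ₜ X) : Prop :=
  ∀ x : X, Dense {y : X | ∃ n : ℤ, y = hpow S n x}

def distalST {Y : Type*} [MetricSpace Y] (S T : Y ≃ₜ Y) : Prop :=
  ∀ x y : Y, x ≠ y → ∃ ε > 0, ∀ n m : ℤ,
    ε ≤ dist (hpow S n (hpow T m x)) (hpow S n (hpow T m y))

def proxT {Y : Type*} [MetricSpace Y] (T : Y ≃ₜ Y) : Set (Y × Y) :=
  {p | ∀ ε > 0, ∃ m : ℤ, dist (hpow T m p.1) (hpow T m p.2) < ε}

/-!
In a distal system the enveloping semigroup of the action of `G^[2]` on `X⁴` is a group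
(Ellis), and by minimality every point of `Q_{S,T}(X)` is the image of a diagonal point
`(z, z, z, z)` under one of its elements. Together these give the gluing property: if
`(a₁, b₁, a₂, b₂)` and `(a₂, b₂, a₃, b₃)` lie in `Q_{S,T}(X)`, so does `(a₁, b₁, a₃, b₃)`.
If `(x, y, a, a) ∈ Q_{S,T}(X)`, its right edge `(y, a)` also spans the degenerate cube
`(a, a, y, y) ∈ Q_{S,T}(X)`, and gluing the two gives `(x, y, y, y)`. Exchanging the roles of
`S` and `T` handles `R_T(X)`.
-/

open Set Function

section Iterates

variable (S T : X ≃ₜ X)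

lemma hpow_eq_coe_zpow (n : ℤ) : hpow S n = ⇑(S ^ n) := by
  let toPerm : (X ≃ₜ X) →* Equiv.Perm X := MonoidHom.mk' Homeomorph.toEquiv fun _ _ => rfl
  exact congrArg DFunLike.coe (map_zpow toPerm S n).symm

lemma continuous_hpow (n : ℤ) : Continuous (hpow S n) :=
  hpow_eq_coe_zpow S n ▸ (S ^ n).continuous

@[simp]
lemma hpow_zero (x : X) : hpow S 0 x = x := by
  simp [hpow_eq_coe_zpow]

@[simp]
lemma hpow_hpow (a b : ℤ) (x : X) : hpow S a (hpow S b x) = hpow S (a + b) x := by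
  simp [hpow_eq_coe_zpow, zpow_add]

variable {S T}

lemma hpow_comm (hST : ∀ x, S (T x) = T (S x)) (a b : ℤ) (x : X) :
    hpow S a (hpow T b x) = hpow T b (hpow S a x) := by
  have hc : Commute S T := Homeomorph.ext hST
  simpa [hpow_eq_coe_zpow] using DFunLike.congr_fun (hc.zpow_zpow a b).eq x

variable (S T) in
def shift (k l : ℤ) (x : X) : X := hpow S k (hpow T l x)

variable (S T) in
lemma continuous_shift (k l : ℤ) : Continuous (shift S T k l) :=
  (continuous_hpow S k).comp (continuous_hpow T l)

@[simp]
lemma shift_zero_zero (x : X) : shift S T 0 0 x = x := by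
  simp [shift]

lemma shift_shift (hST : ∀ x, S (T x) = T (S x)) (k l k' l' : ℤ) (x : X) :
    shift S T k l (shift S T k' l' x) = shift S T (k + k') (l + l') x := by
  simp only [shift, ← hpow_comm hST k' l, hpow_hpow]

lemma shift_swap (hST : ∀ x, S (T x) = T (S x)) (k l : ℤ) (x : X) :
    shift T S l k x = shift S T k l x :=
  (hpow_comm hST k l x).symm

end Iterates

section Ellis

variable {Z : Type*} [TopologicalSpace Z] {Γ : Set (Z → Z)}

lemma continuous_comp_right (q : Z → Z) : Continuous fun p : Z → Z => p ∘ q :=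
  continuous_pi fun z => continuous_apply (q z)

lemma comp_mem_closure (hc : ∀ f ∈ Γ, Continuous f) (hΓ : ∀ f ∈ Γ, ∀ g ∈ Γ, f ∘ g ∈ Γ)
    {p q : Z → Z} (hp : p ∈ closure Γ) (hq : q ∈ closure Γ) : p ∘ q ∈ closure Γ := by
  have hleft : ∀ f ∈ Γ, f ∘ q ∈ closure Γ := fun f hf =>
    map_mem_closure (continuous_pi fun z => (hc f hf).comp (continuous_apply z)) hq
      (hΓ f hf)
  simpa using map_mem_closure (continuous_comp_right q) hp hleft

lemma exists_comp_self_eq [T2Space Z] {K : Set (Z → Z)} (hK : IsCompact K) (hne : K.Nonempty)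
    (hKK : ∀ f ∈ K, ∀ g ∈ K, f ∘ g ∈ K) : ∃ u ∈ K, u ∘ u = u :=
  letI : TopologicalSpace (Function.End Z) := Pi.topologicalSpace
  haveI : T2Space (Function.End Z) := Pi.t2Space
  exists_idempotent_in_compact_subsemigroup (M := Function.End Z) continuous_comp_right K hne hK
    hKK

lemma exists_inverse_of_idempotent_eq_id [CompactSpace Z] [T2Space Z]
    (hc : ∀ f ∈ Γ, Continuous f) (hΓ : ∀ f ∈ Γ, ∀ g ∈ Γ, f ∘ g ∈ Γ) (hid : id ∈ Γ)
    (hidem : ∀ u ∈ closure Γ, u ∘ u = u → u = id) {p : Z → Z} (hp : p ∈ closure Γ) :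
    ∃ q ∈ closure Γ, q ∘ p = id ∧ p ∘ q = id := by
  have left_inv : ∀ p ∈ closure Γ, ∃ q ∈ closure Γ, q ∘ p = id := by
    intro p hp
    -- an idempotent `q ∘ p` of the compact left ideal `closure Γ ∘ p` must be `id`
    obtain ⟨_, ⟨q, hq, rfl⟩, hqq⟩ := exists_comp_self_eq
      (isClosed_closure.isCompact.image (continuous_comp_right p))
      ⟨p, id, subset_closure hid, rfl⟩ (by
        rintro _ ⟨u, hu, rfl⟩ _ ⟨v, hv, rfl⟩
        exact ⟨u ∘ p ∘ v, comp_mem_closure hc hΓ hu (comp_mem_closure hc hΓ hp hv), rfl⟩)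
    exact ⟨q, hq, hidem _ (comp_mem_closure hc hΓ hq hp) hqq⟩
  obtain ⟨q, hq, hqp⟩ := left_inv p hp
  obtain ⟨r, -, hrq⟩ := left_inv q hq
  have hrp : r = p := by
    calc r = r ∘ (q ∘ p) := by rw [hqp]; rfl
      _ = p := by rw [← comp_assoc, hrq]; rfl
  exact ⟨q, hq, hqp, hrp ▸ hrq⟩

lemma exists_mem_closure_apply_eq [CompactSpace Z] [T2Space Z] (z : Z) {w : Z}
    (hw : w ∈ closure ((fun γ : Z → Z => γ z) '' Γ)) : ∃ u ∈ closure Γ, u z = w := by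
  rwa [(continuous_apply z).isClosedMap.closure_image_eq_of_continuous (continuous_apply z)] at hw

end Ellis

section DistalFamily

variable {Y : Type*} [PseudoMetricSpace Y]

def IsDistalFamily (Γ : Set (Y → Y)) : Prop :=
  ∀ z w : Y, z ≠ w → ∃ ε > 0, ∀ γ ∈ Γ, ε ≤ dist (γ z) (γ w)

lemma IsDistalFamily.mono {Γ Γ' : Set (Y → Y)} (h : IsDistalFamily Γ) (h' : Γ' ⊆ Γ) :
    IsDistalFamily Γ' := fun z w hzw =>
  let ⟨ε, hε, hγ⟩ := h z w hzw
  ⟨ε, hε, fun γ hγ' => hγ γ (h' hγ')⟩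

lemma IsDistalFamily.image2_prodMap {Y' : Type*} [PseudoMetricSpace Y'] {Γ : Set (Y → Y)}
    {Γ' : Set (Y' → Y')} (h : IsDistalFamily Γ) (h' : IsDistalFamily Γ') :
    IsDistalFamily (image2 Prod.map Γ Γ') := by
  rintro ⟨z, z'⟩ ⟨w, w'⟩ hne
  by_cases hzw : z = w
  · obtain ⟨ε, hε, hγ⟩ := h' z' w' fun h => hne (by rw [hzw, h])
    refine ⟨ε, hε, ?_⟩
    rintro _ ⟨f, -, g, hg, rfl⟩
    exact (hγ g hg).trans (by simp [Prod.dist_eq])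
  · obtain ⟨ε, hε, hγ⟩ := h z w hzw
    refine ⟨ε, hε, ?_⟩
    rintro _ ⟨f, hf, g, -, rfl⟩
    exact (hγ f hf).trans (by simp [Prod.dist_eq])

lemma IsDistalFamily.eq_id_of_comp_self {Γ : Set (Y → Y)} (h : IsDistalFamily Γ) {u : Y → Y}
    (hu : u ∈ closure Γ) (huu : u ∘ u = u) : u = id := by
  funext z
  by_contra hne
  obtain ⟨ε, hε, hγ⟩ := h (u z) z hne
  have hclosed : IsClosed {f : Y → Y | ε ≤ dist (f (u z)) (f z)} :=
    isClosed_le continuous_const ((continuous_apply _).dist (continuous_apply _))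
  have hle : ε ≤ dist (u (u z)) (u z) := closure_minimal hγ hclosed hu
  rw [show u (u z) = u z from congrFun huu z, dist_self] at hle
  exact hle.not_gt hε

end DistalFamily

section CubeMaps

variable {S T : X ≃ₜ X}

abbrev map4 (f₁ f₂ f₃ f₄ : X → X) : X × X × X × X → X × X × X × X :=
  Prod.map f₁ (Prod.map f₂ (Prod.map f₃ f₄))

variable (S T) in
/-- `S^k T^l × S^(k+n) T^l × S^k T^(l+m) × S^(k+n) T^(l+m)`, the general element of the group
`G^[2]` generated by the diagonal transformations and the face transformations
`id × S × id × S`, `id × id × T × T`. -/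
def cubeMap (k l n m : ℤ) : X × X × X × X → X × X × X × X :=
  map4 (shift S T k l) (shift S T (k + n) l) (shift S T k (l + m)) (shift S T (k + n) (l + m))

variable (S T) in
def cubeMaps : Set (X × X × X × X → X × X × X × X) :=
  {f | ∃ k l n m, f = cubeMap S T k l n m}

lemma continuous_cubeMap (k l n m : ℤ) : Continuous (cubeMap S T k l n m) :=
  (continuous_shift S T _ _).prodMap <| (continuous_shift S T _ _).prodMap <|
    (continuous_shift S T _ _).prodMap (continuous_shift S T _ _)

lemma continuous_of_mem_cubeMaps : ∀ f ∈ cubeMaps S T, Continuous f := by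
  rintro _ ⟨k, l, n, m, rfl⟩
  exact continuous_cubeMap k l n m

lemma id_mem_cubeMaps : id ∈ cubeMaps S T :=
  ⟨0, 0, 0, 0, by ext <;> simp [cubeMap]⟩

lemma cubeMap_comp_cubeMap (hST : ∀ x, S (T x) = T (S x)) (k l n m k' l' n' m' : ℤ) :
    cubeMap S T k l n m ∘ cubeMap S T k' l' n' m' =
      cubeMap S T (k + k') (l + l') (n + n') (m + m') := by
  funext ⟨a, b, c, d⟩
  ext <;> simp only [cubeMap, map4, comp_apply, Prod.map_apply, shift_shift hST] <;>
    congr 1 <;> ring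

lemma comp_mem_cubeMaps (hST : ∀ x, S (T x) = T (S x)) :
    ∀ f ∈ cubeMaps S T, ∀ g ∈ cubeMaps S T, f ∘ g ∈ cubeMaps S T := by
  rintro _ ⟨k, l, n, m, rfl⟩ _ ⟨k', l', n', m', rfl⟩
  exact ⟨_, _, _, _, cubeMap_comp_cubeMap hST k l n m k' l' n' m'⟩

lemma cubeMap_apply_diag (hST : ∀ x, S (T x) = T (S x)) (k l n m : ℤ) (x : X) :
    cubeMap S T k l n m (x, x, x, x) =
      cubeMap S T 0 0 n m (shift S T k l x, shift S T k l x, shift S T k l x, shift S T k l x) := by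
  ext <;> simp only [cubeMap, map4, Prod.map_apply, shift_shift hST] <;> congr 1 <;> ring

lemma cube_eq_closure_cubeMap (S T : X ≃ₜ X) :
    cube S T = closure {p | ∃ (x : X) (n m : ℤ), p = cubeMap S T 0 0 n m (x, x, x, x)} := by
  simp [cube, cubeMap, shift]

lemma cubeMap_apply_diag_mem_cube (hST : ∀ x, S (T x) = T (S x)) (k l n m : ℤ) (x : X) :
    cubeMap S T k l n m (x, x, x, x) ∈ cube S T := by
  rw [cubeMap_apply_diag hST, cube_eq_closure_cubeMap]
  exact subset_closure ⟨_, n, m, rfl⟩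

lemma mapsTo_cube {S' T' : X ≃ₜ X} {φ : X × X × X × X → X × X × X × X} (hφ : Continuous φ)
    (h : ∀ (x : X) (n m : ℤ), φ (cubeMap S T 0 0 n m (x, x, x, x)) ∈ cube S' T') :
    MapsTo φ (cube S T) (cube S' T') := by
  rw [cube_eq_closure_cubeMap S T]
  refine fun p hp => closure_minimal ?_ (isClosed_closure.preimage hφ) hp
  rintro _ ⟨x, n, m, rfl⟩
  exact h x n m

lemma mapsTo_cubeMap_cube (hST : ∀ x, S (T x) = T (S x)) (k l n m : ℤ) :
    MapsTo (cubeMap S T k l n m) (cube S T) (cube S T) :=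
  mapsTo_cube (continuous_cubeMap k l n m) fun x n' m' => by
    rw [← comp_apply (f := cubeMap S T k l n m), cubeMap_comp_cubeMap hST]
    exact cubeMap_apply_diag_mem_cube hST _ _ _ _ x

lemma mapsTo_cube_of_mem_closure (hST : ∀ x, S (T x) = T (S x))
    {u : X × X × X × X → X × X × X × X} (hu : u ∈ closure (cubeMaps S T)) :
    MapsTo u (cube S T) (cube S T) := by
  intro w hw
  have hclosed : IsClosed {f : X × X × X × X → X × X × X × X | f w ∈ cube S T} :=
    isClosed_closure.preimage (continuous_apply w)
  refine closure_minimal ?_ hclosed hu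
  rintro _ ⟨k, l, n, m, rfl⟩
  exact mapsTo_cubeMap_cube hST k l n m hw

lemma cube_subset_closure_orbit (hST : ∀ x, S (T x) = T (S x)) (hmin : minimalST S T) (z : X) :
    cube S T ⊆ closure ((fun γ => γ (z, z, z, z)) '' cubeMaps S T) := by
  rw [cube_eq_closure_cubeMap]
  refine closure_minimal ?_ isClosed_closure
  rintro _ ⟨x, n, m, rfl⟩
  have hx : x ∈ closure {y | ∃ k l : ℤ, y = hpow S k (hpow T l z)} := by
    rw [(hmin z).closure_eq]; trivial
  have hcont : Continuous fun y : X => cubeMap S T 0 0 n m (y, y, y, y) :=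
    (continuous_cubeMap 0 0 n m).comp <| continuous_id.prodMk <| continuous_id.prodMk <|
      continuous_id.prodMk continuous_id
  refine map_mem_closure (f := fun y : X => cubeMap S T 0 0 n m (y, y, y, y)) hcont hx ?_
  rintro _ ⟨k, l, rfl⟩
  exact ⟨cubeMap S T k l n m, ⟨k, l, n, m, rfl⟩, cubeMap_apply_diag hST k l n m z⟩

lemma exists_eq_map4_of_mem_closure [T2Space X] {u : X × X × X × X → X × X × X × X}
    (hu : u ∈ closure (cubeMaps S T)) : ∃ f₁ f₂ f₃ f₄ : X → X, u = map4 f₁ f₂ f₃ f₄ := by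
  let diagCoords : (X × X × X × X → X × X × X × X) → X × X × X × X → X × X × X × X :=
    fun u => map4 (fun x => (u (x, x, x, x)).1) (fun x => (u (x, x, x, x)).2.1)
      (fun x => (u (x, x, x, x)).2.2.1) (fun x => (u (x, x, x, x)).2.2.2)
  have hcont : Continuous diagCoords := continuous_pi fun ⟨a, b, c, d⟩ => by
    simp only [diagCoords, map4, Prod.map_apply]
    fun_prop
  have hsub : closure (cubeMaps S T) ⊆ {u | u = diagCoords u} := by
    refine closure_minimal ?_ (isClosed_eq continuous_id hcont)
    rintro _ ⟨k, l, n, m, rfl⟩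
    rfl
  exact ⟨_, _, _, _, hsub hu⟩

/-- For `u = u₁ × u₂ × u₃ × u₄` this is `u₁ × u₂ × u₁ × u₂`. -/
def bottomDouble (u : X × X × X × X → X × X × X × X) : X × X × X × X → X × X × X × X :=
  map4 (fun x => (u (x, x, x, x)).1) (fun x => (u (x, x, x, x)).2.1)
    (fun x => (u (x, x, x, x)).1) (fun x => (u (x, x, x, x)).2.1)

lemma bottomDouble_mem_closure {u : X × X × X × X → X × X × X × X}
    (hu : u ∈ closure (cubeMaps S T)) : bottomDouble u ∈ closure (cubeMaps S T) := by
  have hcont : Continuous (bottomDouble : (X × X × X × X → X × X × X × X) → _) :=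
    continuous_pi fun ⟨a, b, c, d⟩ => by
      simp only [bottomDouble, map4, Prod.map_apply]
      fun_prop
  refine map_mem_closure hcont hu ?_
  rintro _ ⟨k, l, n, m, rfl⟩
  exact ⟨k, l, n, 0, by ext <;> simp [bottomDouble, cubeMap]⟩

end CubeMaps

section Symmetries

variable {S T : X ≃ₜ X} {a b c d : X}

lemma mem_cube_rightEdge (hST : ∀ x, S (T x) = T (S x)) (h : (a, b, c, d) ∈ cube S T) :
    (d, d, b, b) ∈ cube S T := by
  refine mapsTo_cube (φ := fun p => (p.2.2.2, p.2.2.2, p.2.1, p.2.1)) (by fun_prop) ?_ h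
  intro x n m
  simpa [cubeMap] using cubeMap_apply_diag_mem_cube hST n m 0 (-m) x

lemma mem_cube_swap (hST : ∀ x, S (T x) = T (S x)) (h : (a, b, c, d) ∈ cube S T) :
    (a, c, b, d) ∈ cube T S := by
  refine mapsTo_cube (φ := fun p => (p.1, p.2.2.1, p.2.1, p.2.2.2)) (by fun_prop) ?_ h
  intro x n m
  simpa [cubeMap, shift_swap hST] using
    cubeMap_apply_diag_mem_cube (fun x => (hST x).symm) 0 0 m n x

lemma minimalST.swap (hST : ∀ x, S (T x) = T (S x)) (hmin : minimalST S T) : minimalST T S := by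
  intro x
  convert hmin x using 3 with y
  exact ⟨fun ⟨n, m, h⟩ => ⟨m, n, h.trans (hpow_comm hST m n x).symm⟩,
    fun ⟨n, m, h⟩ => ⟨m, n, h.trans (hpow_comm hST n m x)⟩⟩

end Symmetries

section Distal

variable {X : Type*} [MetricSpace X] {S T : X ≃ₜ X}

lemma distalST.swap (hST : ∀ x, S (T x) = T (S x)) (hd : distalST S T) : distalST T S := by
  intro x y hxy
  obtain ⟨ε, hε, h⟩ := hd x y hxy
  exact ⟨ε, hε, fun n m => by simpa only [hpow_comm hST] using h m n⟩

lemma isDistalFamily_cubeMaps (hd : distalST S T) : IsDistalFamily (cubeMaps S T) := by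
  have hshift : IsDistalFamily {f | ∃ k l : ℤ, f = shift S T k l} := fun z w hzw => by
    obtain ⟨ε, hε, h⟩ := hd z w hzw
    exact ⟨ε, hε, by rintro _ ⟨k, l, rfl⟩; exact h k l⟩
  refine (hshift.image2_prodMap (hshift.image2_prodMap (hshift.image2_prodMap hshift))).mono ?_
  rintro _ ⟨k, l, n, m, rfl⟩
  exact ⟨_, ⟨k, l, rfl⟩, _, ⟨_, ⟨k + n, l, rfl⟩, _, ⟨_, ⟨k, l + m, rfl⟩, _, ⟨k + n, l + m, rfl⟩,
    rfl⟩, rfl⟩, rfl⟩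

variable [CompactSpace X]

lemma exists_inverse_of_mem_closure_cubeMaps (hST : ∀ x, S (T x) = T (S x)) (hd : distalST S T)
    {p : X × X × X × X → X × X × X × X} (hp : p ∈ closure (cubeMaps S T)) :
    ∃ q ∈ closure (cubeMaps S T), q ∘ p = id ∧ p ∘ q = id :=
  exists_inverse_of_idempotent_eq_id continuous_of_mem_cubeMaps (comp_mem_cubeMaps hST)
    id_mem_cubeMaps (fun _ hu => (isDistalFamily_cubeMaps hd).eq_id_of_comp_self hu) hp

lemma mem_cube_trans (hST : ∀ x, S (T x) = T (S x)) (hmin : minimalST S T)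
    (hd : distalST S T) {a₁ b₁ a₂ b₂ a₃ b₃ : X} (h₁ : (a₁, b₁, a₂, b₂) ∈ cube S T)
    (h₂ : (a₂, b₂, a₃, b₃) ∈ cube S T) : (a₁, b₁, a₃, b₃) ∈ cube S T := by
  -- If `u = u₁ × u₂ × u₃ × u₄` sends `(a₂, a₂, a₂, a₂)` to `(a₂, b₂, a₃, b₃)`, then
  -- `u ∘ (u₁ × u₂ × u₁ × u₂)⁻¹ = id × id × u₃u₁⁻¹ × u₄u₂⁻¹` sends `(a₁, b₁, a₂, b₂)` to
  -- `(a₁, b₁, a₃, b₃)`.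
  obtain ⟨u, hu, hua⟩ :=
    exists_mem_closure_apply_eq (a₂, a₂, a₂, a₂) (cube_subset_closure_orbit hST hmin a₂ h₂)
  obtain ⟨q, hq, hqv, hvq⟩ :=
    exists_inverse_of_mem_closure_cubeMaps hST hd (bottomDouble_mem_closure hu)
  have hmaps := mapsTo_cube_of_mem_closure hST
    (comp_mem_closure continuous_of_mem_cubeMaps (comp_mem_cubeMaps hST) hu hq) h₁
  obtain ⟨u₁, u₂, u₃, u₄, rfl⟩ := exists_eq_map4_of_mem_closure hu
  obtain ⟨q₁, q₂, q₃, q₄, rfl⟩ := exists_eq_map4_of_mem_closure hq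
  have hvq' := congrFun hvq (a₁, b₁, a₁, b₁)
  have hqv' := congrFun hqv (a₂, a₂, a₂, a₂)
  simp only [bottomDouble, map4, comp_apply, Prod.map_apply, id, Prod.mk.injEq]
    at hua hvq' hqv' hmaps
  obtain ⟨hu₁, hu₂, hu₃, hu₄⟩ := hua
  rw [hu₁, hu₂] at hqv'
  rwa [hvq'.1, hvq'.2.1, hqv'.2.2.1, hqv'.2.2.2, hu₃, hu₄] at hmaps

lemma mem_cube_of_mem_relS (hST : ∀ x, S (T x) = T (S x)) (hmin : minimalST S T)
    (hd : distalST S T) {x y : X} (h : (x, y) ∈ relS S T) : (x, y, y, y) ∈ cube S T := by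
  obtain ⟨a, ha⟩ := h
  exact mem_cube_trans hST hmin hd ha (mem_cube_rightEdge hST ha)

lemma mem_cube_of_mem_relT (hST : ∀ x, S (T x) = T (S x)) (hmin : minimalST S T)
    (hd : distalST S T) {x y : X} (h : (x, y) ∈ relT S T) : (x, y, y, y) ∈ cube S T := by
  obtain ⟨b, hb⟩ := h
  have hTS : ∀ x, T (S x) = S (T x) := fun x => (hST x).symm
  exact mem_cube_swap hTS <|
    mem_cube_of_mem_relS hTS (hmin.swap hST) (hd.swap hST) ⟨b, mem_cube_swap hST hb⟩

end Distal

theorem stmt11 {X : Type*} [MetricSpace X] [CompactSpace X] (S T : X ≃ₜ X)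
    (hST : ∀ x, S (T x) = T (S x)) (hmin : minimalST S T) (hd : distalST S T) :
    (∀ x y : X, (((x, y, y, y) ∈ cube S T) ↔ (x, y) ∈ relS S T) ∧
      (((x, y, y, y) ∈ cube S T) ↔ (x, y) ∈ relT S T)) ∧
    relS S T = relT S T ∧ relS S T = relS S T ∩ relT S T := by
  have hS : ∀ x y : X, (x, y, y, y) ∈ cube S T ↔ (x, y) ∈ relS S T := fun x y =>
    ⟨fun h => ⟨y, h⟩, mem_cube_of_mem_relS hST hmin hd⟩
  have hT : ∀ x y : X, (x, y, y, y) ∈ cube S T ↔ (x, y) ∈ relT S T := fun x y =>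
    ⟨fun h => ⟨y, h⟩, mem_cube_of_mem_relT hST hmin hd⟩
  have hST_eq : relS S T = relT S T := Set.ext fun ⟨x, y⟩ => (hS x y).symm.trans (hT x y)
  exact ⟨fun x y => ⟨hS x y, hT x y⟩, hST_eq, by rw [← hST_eq, inter_self]⟩
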